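/- Let λ ∈ (0,1), σ > 0, M > 0 and ε ∈ (0,1). Then there exists K > 0 such that for every k > K and every C ∈ (0, M], there is no x > 0 satisfying (σ/2)·C·x^λ ≥ (k/(4ε))·x + ε. Moreover one may take K = (C̃·M^{1/(1−λ)}/ε)^{(1−λ)/λ}, where C̃ = 2^{(2λ−2δ'−1)/(1−λ)}·σ^{1/(1−λ)} with δ' = 0, i.e. C̃ = 2^{(2λ−1)/(1−λ)}·σ^{1/(1−λ)}. -/

import Mathlib

/-! Splitting at `x = u` gives `x ^ λ ≤ u ^ λ + u ^ (λ - 1) * x` for every `u > 0`; choosing `u`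
with `a * u ^ (λ - 1) = b` absorbs the linear term, so
`a * x ^ λ - b * x ≤ a * (a / b) ^ (λ / (1 - λ))`. For `a = σC/2`, `b = k/(4ε)` the right side is
`(σC/2)(2σCε/k) ^ (λ/(1-λ)) ≤ (σM/2)(2σM/k) ^ (λ/(1-λ))`, and `K` is exactly the value of `k` at which the latter equals `ε`. -/

theorem rpow_le_rpow_add_rpow_sub_one_mul {l x u : ℝ} (hl0 : 0 ≤ l) (hl1 : l ≤ 1)
    (hx : 0 ≤ x) (hu : 0 < u) : x ^ l ≤ u ^ l + u ^ (l - 1) * x := by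
  rcases le_total x u with hxu | hux
  · have hpow : x ^ l ≤ u ^ l := Real.rpow_le_rpow hx hxu hl0
    have hlin : 0 ≤ u ^ (l - 1) * x := by positivity
    linarith
  · have hx' : 0 < x := hu.trans_le hux
    calc x ^ l = x ^ (l - 1) * x := by rw [← Real.rpow_add_one hx'.ne']; ring_nf
      _ ≤ u ^ (l - 1) * x :=
          mul_le_mul_of_nonneg_right (Real.rpow_le_rpow_of_nonpos hu hux (by linarith)) hx
      _ ≤ u ^ l + u ^ (l - 1) * x := le_add_of_nonneg_left (by positivity)

theorem mul_rpow_sub_mul_le {l a b x : ℝ} (hl0 : 0 ≤ l) (hl1 : l < 1) (ha : 0 < a) (hb : 0 < b)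
    (hx : 0 ≤ x) : a * x ^ l - b * x ≤ a * (a / b) ^ (l / (1 - l)) := by
  have hab : 0 < a / b := by positivity
  set u := (a / b) ^ (1 / (1 - l))
  have hu : 0 < u := by positivity
  have hul : u ^ l = (a / b) ^ (l / (1 - l)) := by
    rw [← Real.rpow_mul hab.le]; ring_nf
  have hul1 : a * u ^ (l - 1) = b := by
    have h1l : 1 - l ≠ 0 := by linarith
    rw [← Real.rpow_mul hab.le, show 1 / (1 - l) * (l - 1) = -1 by field_simp; ring,
      Real.rpow_neg_one, inv_div]
    field_simp
  have hsplit :=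
    mul_le_mul_of_nonneg_left (rpow_le_rpow_add_rpow_sub_one_mul hl0 hl1.le hx hu) ha.le
  rw [mul_add, ← mul_assoc, hul1, hul] at hsplit
  linarith

theorem two_rpow_mul_rpow_mul_rpow {l σ M : ℝ} (hl1 : l < 1) (hσ : 0 ≤ σ) (hM : 0 ≤ M) :
    (2 : ℝ) ^ ((2 * l - 1) / (1 - l)) * σ ^ (1 / (1 - l)) * M ^ (1 / (1 - l))
      = (2 * σ * M) ^ (1 / (1 - l)) / 4 := by
  have h1l : 1 - l ≠ 0 := by linarith
  rw [show (2 * l - 1) / (1 - l) = 1 / (1 - l) - 2 by field_simp; ring,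
    Real.rpow_sub two_pos, Real.mul_rpow (by positivity) hM, Real.mul_rpow zero_le_two hσ]
  norm_num
  ring

theorem div_four_mul_div_rpow_eq {l a ε : ℝ} (hl0 : 0 < l) (hl1 : l < 1) (ha : 0 < a)
    (hε : 0 < ε) :
    a / 4 * (a / (a ^ (1 / (1 - l)) / 4 / ε) ^ ((1 - l) / l)) ^ (l / (1 - l)) = ε := by
  have h1l : 1 - l ≠ 0 := by linarith
  have hK : ((a ^ (1 / (1 - l)) / 4 / ε) ^ ((1 - l) / l)) ^ (l / (1 - l))
      = a ^ (1 / (1 - l)) / 4 / ε := by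
    rw [← inv_div l, Real.rpow_inv_rpow (by positivity) (by positivity)]
  have has : a ^ (1 / (1 - l)) = a ^ (l / (1 - l)) * a := by
    rw [← Real.rpow_add_one ha.ne']; congr 1; field_simp; ring
  rw [Real.div_rpow ha.le (by positivity), hK, has]
  field_simp

theorem fCIR_no_excursion_inequality_for_large_k (l σ M ε : ℝ)
    (hl0 : 0 < l) (hl1 : l < 1) (hσ : 0 < σ) (hM : 0 < M) (hε0 : 0 < ε) (hε1 : ε < 1)
    (Ctil K : ℝ)
    (hCtil : Ctil = (2 : ℝ) ^ ((2 * l - 1) / (1 - l)) * σ ^ (1 / (1 - l)))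
    (hK : K = (Ctil * M ^ (1 / (1 - l)) / ε) ^ ((1 - l) / l)) :
    0 < K ∧ ∀ k : ℝ, K < k → ∀ C : ℝ, 0 < C → C ≤ M →
      ¬ ∃ x : ℝ, 0 < x ∧ (k / (4 * ε)) * x + ε ≤ (σ / 2) * C * x ^ l := by
  rw [hCtil, two_rpow_mul_rpow_mul_rpow hl1 hσ.le hM.le] at hK
  have hK0 : 0 < K := by rw [hK]; positivity
  refine ⟨hK0, ?_⟩
  rintro k hk C hC hCM ⟨x, hx, hineq⟩
  have hk0 : 0 < k := hK0.trans hk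
  have hCε : C * ε ≤ M := (mul_le_of_le_one_right hC.le hε1.le).trans hCM
  have hbound := mul_rpow_sub_mul_le hl0.le hl1 (by positivity : 0 < σ / 2 * C)
    (by positivity : 0 < k / (4 * ε)) hx.le
  have hsmall : σ / 2 * C * (σ / 2 * C / (k / (4 * ε))) ^ (l / (1 - l)) < ε :=
    calc σ / 2 * C * (σ / 2 * C / (k / (4 * ε))) ^ (l / (1 - l))
        = σ * C / 2 * (2 * σ * (C * ε) / k) ^ (l / (1 - l)) := by
          rw [show σ / 2 * C / (k / (4 * ε)) = 2 * σ * (C * ε) / k by field_simp; ring]; ring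
      _ ≤ σ * M / 2 * (2 * σ * M / k) ^ (l / (1 - l)) := by gcongr
      _ < σ * M / 2 * (2 * σ * M / K) ^ (l / (1 - l)) := by gcongr
      _ = ε := by
          rw [hK]
          convert div_four_mul_div_rpow_eq hl0 hl1 (by positivity : 0 < 2 * σ * M) hε0 using 1
          ring
  linarith
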